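/- arXiv:2404.16713 — 4 statements merged into one kernel-verified Lean document; each statement's English description precedes it below -/
import Mathlib

section
/- On a paraquaternionic vector space (V, g, I_1, I_2, I_3) of dimension 4n with adapted basis, the identity (∇φ_i)(X, I_j Y, I_k Z) + (∇φ_j)(X, I_k Y, I_i Z) + (∇φ_k)(X, I_i Y, I_j Z) = 0 holds for any covariant-derivative-type tensor ∇φ_s arising from a g-preserving connection, where (i,j,k) is a cyclic permutation of (1,2,3). -/
/-- `ε₁ = ε₂ = 1`, `ε₃ = -1` (indices `0, 1, 2`). -/
def eps : Fin 3 → ℝ := ![1, 1, -1]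

/-- `(i,j,k)` is a cyclic permutation of `(1,2,3)` (i.e. of `(0,1,2)`). -/
def Cyclic (i j k : Fin 3) : Prop :=
  (i = 0 ∧ j = 1 ∧ k = 2) ∨ (i = 1 ∧ j = 2 ∧ k = 0) ∨ (i = 2 ∧ j = 0 ∧ k = 1)

private lemma pqc_aux {V : Type*} [AddCommGroup V] [Module ℝ V]
    (g : LinearMap.BilinForm ℝ V)
    (B Ii Ij Ik : V →ₗ[ℝ] V) (ei ej ek : ℝ)
    (hij : ∀ X, Ii (Ij X) = -ek • Ik X)
    (hjk : ∀ X, Ij (Ik X) = -ei • Ii X)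
    (hki : ∀ X, Ik (Ii X) = -ej • Ij X)
    (hik : ∀ X, Ii (Ik X) = ej • Ij X)
    (hji : ∀ X, Ij (Ii X) = ek • Ik X)
    (hkj : ∀ X, Ik (Ij X) = ei • Ii X)
    (fi : ∀ u v, g (Ii u) v = - g u (Ii v))
    (fj : ∀ u v, g (Ij u) v = - g u (Ij v))
    (fk : ∀ u v, g (Ik u) v = - g u (Ik v))
    (Y Z : V) :
    g (B (Ii (Ij Y)) - Ii (B (Ij Y))) (Ik Z) +
    g (B (Ij (Ik Y)) - Ij (B (Ik Y))) (Ii Z) +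
    g (B (Ik (Ii Y)) - Ik (B (Ii Y))) (Ij Z) = 0 := by
  rw [hij, hjk, hki]
  simp only [map_sub, map_smul, LinearMap.sub_apply, LinearMap.smul_apply,
    fi (B (Ij Y)), fj (B (Ik Y)), fk (B (Ii Y)), hik, hji, hkj,
    map_smul, smul_eq_mul]
  ring

/-- On a `4n`-dimensional paraquaternionic vector space, for any `g`-preserving
connection-type operator `A` the covariant derivatives
`(∇_X φ_s)(Y,Z) = g([A(X), I_s]Y, Z)` satisfy the cyclic identity
`(∇φᵢ)(X, IⱼY, IₖZ) + (∇φⱼ)(X, IₖY, IᵢZ) + (∇φₖ)(X, IᵢY, IⱼZ) = 0`. -/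
theorem pqc_cyclic_nabla_phi_identity
    {V : Type*} [AddCommGroup V] [Module ℝ V] (n : ℕ)
    (hdim : Module.finrank ℝ V = 4 * n)
    (g : LinearMap.BilinForm ℝ V)
    (I : Fin 3 → V →ₗ[ℝ] V)
    (hsq : ∀ s X, I s (I s X) = eps s • X)
    (hmul : ∀ i j k, Cyclic i j k → ∀ X,
      I i (I j X) = -eps k • I k X ∧ I j (I i X) = eps k • I k X)
    (hcompat : ∀ s X Y, g (I s X) (I s Y) = -eps s * g X Y)
    (A : V → V →ₗ[ℝ] V)
    (hskew : ∀ X Y Z, g (A X Y) Z = -g Y (A X Z)) :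
    ∀ i j k, Cyclic i j k → ∀ X Y Z,
      (g (A X (I i (I j Y)) - I i (A X (I j Y))) (I k Z)) +
      (g (A X (I j (I k Y)) - I j (A X (I k Y))) (I i Z)) +
      (g (A X (I k (I i Y)) - I k (A X (I i Y))) (I j Z)) = 0 := by
  have hflip : ∀ s u v, g (I s u) v = - g u (I s v) := by
    intro s u v
    have h1 := hcompat s u (I s v)
    rw [hsq, map_smul, smul_eq_mul] at h1
    fin_cases s <;> simp [eps] at h1 ⊢ <;> linarith
  intro i j k hc X Y Z
  have c012 : Cyclic 0 1 2 := Or.inl ⟨rfl, rfl, rfl⟩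
  have c120 : Cyclic 1 2 0 := Or.inr (Or.inl ⟨rfl, rfl, rfl⟩)
  have c201 : Cyclic 2 0 1 := Or.inr (Or.inr ⟨rfl, rfl, rfl⟩)
  rcases hc with ⟨hi, hj, hk⟩ | ⟨hi, hj, hk⟩ | ⟨hi, hj, hk⟩ <;> subst hi <;> subst hj <;> subst hk
  · exact pqc_aux g (A X) (I 0) (I 1) (I 2) (eps 0) (eps 1) (eps 2)
      (fun w => (hmul 0 1 2 c012 w).1) (fun w => (hmul 1 2 0 c120 w).1)
      (fun w => (hmul 2 0 1 c201 w).1) (fun w => (hmul 2 0 1 c201 w).2)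
      (fun w => (hmul 0 1 2 c012 w).2) (fun w => (hmul 1 2 0 c120 w).2)
      (hflip 0) (hflip 1) (hflip 2) Y Z
  · exact pqc_aux g (A X) (I 1) (I 2) (I 0) (eps 1) (eps 2) (eps 0)
      (fun w => (hmul 1 2 0 c120 w).1) (fun w => (hmul 2 0 1 c201 w).1)
      (fun w => (hmul 0 1 2 c012 w).1) (fun w => (hmul 0 1 2 c012 w).2)
      (fun w => (hmul 1 2 0 c120 w).2) (fun w => (hmul 2 0 1 c201 w).2)
      (hflip 1) (hflip 2) (hflip 0) Y Z
  · exact pqc_aux g (A X) (I 2) (I 0) (I 1) (eps 2) (eps 0) (eps 1)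
      (fun w => (hmul 2 0 1 c201 w).1) (fun w => (hmul 0 1 2 c012 w).1)
      (fun w => (hmul 1 2 0 c120 w).1) (fun w => (hmul 1 2 0 c120 w).2)
      (fun w => (hmul 2 0 1 c201 w).2) (fun w => (hmul 0 1 2 c012 w).2)
      (hflip 2) (hflip 0) (hflip 1) Y Z
end

section
/- The 7-dimensional real Lie algebra l_0 with basis γ^1,…,γ^7 of the dual space and structure equations dγ^1 = 0, dγ^2 = -c γ^3∧γ^4, dγ^3 = -c γ^2∧γ^4, dγ^4 = 0, dγ^5 = 2γ^1∧γ^2 + 2γ^3∧γ^4 + c γ^4∧γ^6, dγ^6 = 2γ^1∧γ^3 + 2γ^2∧γ^4 + c γ^4∧γ^5, dγ^7 = 2γ^1∧γ^4 - 2γ^2∧γ^3 (for a fixed real c ≠ 0) satisfies the Jacobi identity, i.e. d^2 γ^l = 0 for all l, and is solvable. -/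
set_option maxHeartbeats 1000000


noncomputable section

/-- The structure constants of the Lie algebra `l₀`:
`brTable c l m` is the vector `[e_l, e_m]` (indices `0,…,6` stand for `1,…,7`),
obtained from the dual structure equations
`dγ¹ = 0`, `dγ² = -c γ³⁴`, `dγ³ = -c γ²⁴`, `dγ⁴ = 0`,
`dγ⁵ = 2γ¹² + 2γ³⁴ + c γ⁴⁶`, `dγ⁶ = 2γ¹³ + 2γ²⁴ + c γ⁴⁵`,
`dγ⁷ = 2γ¹⁴ - 2γ²³` via `dγ(e_l, e_m) = -γ([e_l, e_m])`. -/
def brTable (c : ℝ) : Fin 7 → Fin 7 → (Fin 7 → ℝ) :=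
  ![![0, ![0,0,0,0,-2,0,0], ![0,0,0,0,0,-2,0], ![0,0,0,0,0,0,-2], 0, 0, 0],
    ![![0,0,0,0,2,0,0], 0, ![0,0,0,0,0,0,2], ![0,0,c,0,0,-2,0], 0, 0, 0],
    ![![0,0,0,0,0,2,0], ![0,0,0,0,0,0,-2], 0, ![0,c,0,0,-2,0,0], 0, 0, 0],
    ![![0,0,0,0,0,0,2], ![0,0,-c,0,0,2,0], ![0,-c,0,0,2,0,0], 0, ![0,0,0,0,0,-c,0], ![0,0,0,0,-c,0,0], 0],
    ![0, 0, 0, ![0,0,0,0,0,c,0], 0, 0, 0],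
    ![0, 0, 0, ![0,0,0,0,c,0,0], 0, 0, 0],
    ![0, 0, 0, 0, 0, 0, 0]]

/-- The bilinear bracket on `ℝ⁷` determined by the structure constants. -/
def brkt (c : ℝ) (x y : Fin 7 → ℝ) : Fin 7 → ℝ :=
  ∑ l : Fin 7, ∑ m : Fin 7, (x l * y m) • brTable c l m

/-- The derived series of the bracket. -/
def l0DerivedSeries (c : ℝ) : ℕ → Submodule ℝ (Fin 7 → ℝ)
  | 0 => ⊤
  | (N + 1) => Submodule.span ℝ
      {v | ∃ x ∈ l0DerivedSeries c N, ∃ y ∈ l0DerivedSeries c N, v = brkt c x y}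

section aux
variable {α : Type*} (a0 a1 a2 a3 a4 a5 a6 : α)
lemma v70 : (![a0,a1,a2,a3,a4,a5,a6]) 0 = a0 := rfl
lemma v71 : (![a0,a1,a2,a3,a4,a5,a6]) 1 = a1 := rfl
lemma v72 : (![a0,a1,a2,a3,a4,a5,a6]) 2 = a2 := rfl
lemma v73 : (![a0,a1,a2,a3,a4,a5,a6]) 3 = a3 := rfl
lemma v74 : (![a0,a1,a2,a3,a4,a5,a6]) 4 = a4 := rfl
lemma v75 : (![a0,a1,a2,a3,a4,a5,a6]) 5 = a5 := rfl
lemma v76 : (![a0,a1,a2,a3,a4,a5,a6]) 6 = a6 := rfl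

lemma funext7 (f g : Fin 7 → α) (h0 : f 0 = g 0) (h1 : f 1 = g 1)
    (h2 : f 2 = g 2) (h3 : f 3 = g 3) (h4 : f 4 = g 4) (h5 : f 5 = g 5)
    (h6 : f 6 = g 6) : f = g := by
  funext i; fin_cases i <;> assumption
end aux

lemma brkt_apply (c : ℝ) (x y : Fin 7 → ℝ) (i : Fin 7) :
    brkt c x y i = ∑ l : Fin 7, ∑ m : Fin 7, (x l * y m) * brTable c l m i := by
  simp [brkt, smul_eq_mul]

lemma brkt_expand (c : ℝ) (x y : Fin 7 → ℝ) (i : Fin 7) :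
    brkt c x y i =
      x 0 * y 1 * brTable c 0 1 i + x 0 * y 2 * brTable c 0 2 i +
      x 0 * y 3 * brTable c 0 3 i +
      x 1 * y 0 * brTable c 1 0 i + x 1 * y 2 * brTable c 1 2 i +
      x 1 * y 3 * brTable c 1 3 i +
      x 2 * y 0 * brTable c 2 0 i + x 2 * y 1 * brTable c 2 1 i +
      x 2 * y 3 * brTable c 2 3 i +
      x 3 * y 0 * brTable c 3 0 i + x 3 * y 1 * brTable c 3 1 i +
      x 3 * y 2 * brTable c 3 2 i + x 3 * y 4 * brTable c 3 4 i +
      x 3 * y 5 * brTable c 3 5 i +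
      x 4 * y 3 * brTable c 4 3 i + x 5 * y 3 * brTable c 5 3 i := by
  rw [brkt_apply]
  simp only [Fin.sum_univ_seven, brTable, v70, v71, v72, v73, v74, v75, v76,
    Pi.zero_apply, mul_zero, zero_mul, add_zero, zero_add]
  ring

lemma brkt0 (c : ℝ) (x y : Fin 7 → ℝ) : brkt c x y 0 = 0 := by
  simp [brkt_expand, brTable, v70, v71, v72, v73, v74, v75, v76, Matrix.vecHead, Matrix.vecTail]

lemma brkt3 (c : ℝ) (x y : Fin 7 → ℝ) : brkt c x y 3 = 0 := by
  simp [brkt_expand, brTable, v70, v71, v72, v73, v74, v75, v76, Matrix.vecHead, Matrix.vecTail]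

def S1 : Submodule ℝ (Fin 7 → ℝ) where
  carrier := {v | v 0 = 0 ∧ v 3 = 0}
  add_mem' := by rintro a b ⟨ha0, ha3⟩ ⟨hb0, hb3⟩; constructor <;> simp [ha0, ha3, hb0, hb3]
  zero_mem' := ⟨rfl, rfl⟩
  smul_mem' := by rintro r a ⟨ha0, ha3⟩; constructor <;> simp [ha0, ha3]

def S2 : Submodule ℝ (Fin 7 → ℝ) where
  carrier := {v | v 0 = 0 ∧ v 1 = 0 ∧ v 2 = 0 ∧ v 3 = 0 ∧ v 4 = 0 ∧ v 5 = 0}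
  add_mem' := by
    rintro a b ⟨h1,h2,h3,h4,h5,h6⟩ ⟨g1,g2,g3,g4,g5,g6⟩
    refine ⟨?_,?_,?_,?_,?_,?_⟩ <;> simp [h1,h2,h3,h4,h5,h6,g1,g2,g3,g4,g5,g6]
  zero_mem' := ⟨rfl, rfl, rfl, rfl, rfl, rfl⟩
  smul_mem' := by
    rintro r a ⟨h1,h2,h3,h4,h5,h6⟩
    refine ⟨?_,?_,?_,?_,?_,?_⟩ <;> simp [h1,h2,h3,h4,h5,h6]

lemma brkt_mem_S2 (c : ℝ) (x y : Fin 7 → ℝ) (hx : x ∈ S1) (hy : y ∈ S1) :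
    brkt c x y ∈ S2 := by
  obtain ⟨hx0, hx3⟩ := hx
  obtain ⟨hy0, hy3⟩ := hy
  refine ⟨?_,?_,?_,?_,?_,?_⟩ <;>
    simp [brkt_expand, brTable, v70, v71, v72, v73, v74, v75, v76, Matrix.vecHead, Matrix.vecTail, hx0, hx3, hy0, hy3]

lemma brkt_eq_zero (c : ℝ) (x y : Fin 7 → ℝ) (hx : x ∈ S2) (hy : y ∈ S2) :
    brkt c x y = 0 := by
  obtain ⟨hx0, hx1, hx2, hx3, hx4, hx5⟩ := hx
  obtain ⟨hy0, hy1, hy2, hy3, hy4, hy5⟩ := hy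
  apply funext7 <;>
    simp [brkt_expand, brTable, v70, v71, v72, v73, v74, v75, v76,
      hx0, hx1, hx2, hx3, hx4, hx5, hy0, hy1, hy2, hy3, hy4, hy5, Matrix.vecHead, Matrix.vecTail]

/-- The 7-dimensional algebra `l₀` (for `c ≠ 0`) is a Lie algebra (its bracket is
antisymmetric and satisfies the Jacobi identity, equivalently `d² = 0` on the dual
generators) and it is solvable. -/
theorem l0_lie_algebra_solvable (c : ℝ) (hc : c ≠ 0) :
    (∀ x y : Fin 7 → ℝ, brkt c x y = -brkt c y x) ∧
    (∀ x y z : Fin 7 → ℝ,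
      brkt c (brkt c x y) z + brkt c (brkt c y z) x + brkt c (brkt c z x) y = 0) ∧
    (∃ N : ℕ, l0DerivedSeries c N = ⊥) := by
  refine ⟨?_, ?_, ?_⟩
  · intro x y
    apply funext7 <;>
      (rw [Pi.neg_apply, brkt_expand, brkt_expand];
       simp only [brTable, v70, v71, v72, v73, v74, v75, v76, Pi.zero_apply];
       ring)
  · intro x y z
    apply funext7 <;>
      (simp only [Pi.add_apply, Pi.zero_apply, brkt_expand, brkt0, brkt3,
        brTable, v70, v71, v72, v73, v74, v75, v76, Matrix.vecHead, Matrix.vecTail];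
       ring)
  · refine ⟨3, le_bot_iff.mp ?_⟩
    have h1 : l0DerivedSeries c 1 ≤ S1 := by
      rw [show l0DerivedSeries c 1 = Submodule.span ℝ
        {v | ∃ x ∈ l0DerivedSeries c 0, ∃ y ∈ l0DerivedSeries c 0, v = brkt c x y} from rfl]
      rw [Submodule.span_le]
      rintro v ⟨x, -, y, -, rfl⟩
      exact ⟨brkt0 c x y, brkt3 c x y⟩
    have h2 : l0DerivedSeries c 2 ≤ S2 := by
      rw [show l0DerivedSeries c 2 = Submodule.span ℝ
        {v | ∃ x ∈ l0DerivedSeries c 1, ∃ y ∈ l0DerivedSeries c 1, v = brkt c x y} from rfl]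
      rw [Submodule.span_le]
      rintro v ⟨x, hx, y, hy, rfl⟩
      exact brkt_mem_S2 c x y (h1 hx) (h1 hy)
    rw [show l0DerivedSeries c 3 = Submodule.span ℝ
      {v | ∃ x ∈ l0DerivedSeries c 2, ∃ y ∈ l0DerivedSeries c 2, v = brkt c x y} from rfl]
    rw [Submodule.span_le]
    rintro v ⟨x, hx, y, hy, rfl⟩
    rw [brkt_eq_zero c x y (h2 hx) (h2 hy)]
    simp
end
end

section
/- On a para 3-Sasakian manifold with structure equations dη_i = -2 epsilon_i φ_i - 2 epsilon_i η_j ∧ η_k and dφ_i = 2 epsilon_j φ_j ∧ η_k - 2 epsilon_k φ_k ∧ η_j, the three 2-forms F_i = t^2 φ_i + t^2 η_j ∧ η_k + epsilon_i t η_i ∧ dt on the cone PS × R^+ are closed: dF_i = 0 for each cyclic (i,j,k). -/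
noncomputable section

variable {A : Type*} [Ring A] [Algebra ℝ A]

/-- Apply an additive map to the coefficients of a polynomial. -/
def mapCoeffs (f : A →ₗ[ℝ] A) (q : Polynomial A) : Polynomial A :=
  q.sum fun n a => Polynomial.C (f a) * Polynomial.X ^ n

/-- Forms on the cone `PS × ℝ⁺` are represented as pairs `(α, β)`, standing for
`α(t) + β(t) ∧ dt`, with polynomial dependence on the cone coordinate `t`.
The exterior derivative of the cone is
`d(α + β∧dt) = d_{PS}α + (∂_t α + d_{PS}β) ∧ dt`. -/
def dCone (d : A →ₗ[ℝ] A) (p : Polynomial A × Polynomial A) :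
    Polynomial A × Polynomial A :=
  (mapCoeffs d p.1, Polynomial.derivative p.1 + mapCoeffs d p.2)

/-- The cone 2-form `F_i = t²φ_i + t²η_j∧η_k + ε_i t η_i∧dt`. -/
def coneF (η φ : Fin 3 → A) (i j k : Fin 3) : Polynomial A × Polynomial A :=
  (Polynomial.C (φ i + η j * η k) * Polynomial.X ^ 2,
   Polynomial.C (eps i • η i) * Polynomial.X)

/-- On a para 3-Sasakian manifold with structure equations
`dη_i = -2ε_iφ_i - 2ε_iη_j∧η_k` and `dφ_i = 2ε_jφ_j∧η_k - 2ε_kφ_k∧η_j`, the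
three 2-forms `F_i = t²φ_i + t²η_j∧η_k + ε_i t η_i∧dt` on the cone `PS × ℝ⁺` are
closed: `dF_i = 0`. -/
theorem para3Sasakian_cone_forms_closed
    (d : A →ₗ[ℝ] A)              -- the exterior derivative on forms of PS
    (η φ : Fin 3 → A)            -- the 1-forms η_s and 2-forms φ_s
    (hηalt : ∀ s t, η s * η t = -(η t * η s))
    (hηsq : ∀ s, η s * η s = 0)
    (hφη : ∀ s t, φ s * η t = η t * φ s)
    (hLeibniz : ∀ s t, d (η s * η t) = d (η s) * η t - η s * d (η t))
    (hdη : ∀ i j k, Cyclic i j k →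
      d (η i) = (-2 * eps i) • φ i + (-2 * eps i) • (η j * η k))
    (hdφ : ∀ i j k, Cyclic i j k →
      d (φ i) = (2 * eps j) • (φ j * η k) - (2 * eps k) • (φ k * η j)) :
    ∀ i j k, Cyclic i j k → dCone d (coneF η φ i j k) = 0 := by
  have hmap : ∀ (a : A) (n : ℕ),
      mapCoeffs d (Polynomial.C a * Polynomial.X ^ n)
        = Polynomial.C (d a) * Polynomial.X ^ n := by
    intro a n
    rw [Polynomial.C_mul_X_pow_eq_monomial, mapCoeffs,
      Polynomial.sum_monomial_index]
    simp
  have main : ∀ i j k, Cyclic i j k → Cyclic j k i → Cyclic k i j →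
      dCone d (coneF η φ i j k) = 0 := by
    intro i j k hijk hjki hkij
    have e2 : eps i * eps i = 1 := by
      rcases hijk with ⟨hi, _, _⟩ | ⟨hi, _, _⟩ | ⟨hi, _, _⟩ <;> subst hi <;>
        norm_num [eps, Matrix.cons_val_two, Matrix.vecHead, Matrix.vecTail]
    have z1 : η k * (η i * η k) = 0 := by
      rw [hηalt i k, mul_neg, ← mul_assoc, hηsq, zero_mul, neg_zero]
    have z2 : η j * (η i * η j) = 0 := by
      rw [hηalt i j, mul_neg, ← mul_assoc, hηsq, zero_mul, neg_zero]
    have h1 : d (φ i + η j * η k) = 0 := by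
      rw [map_add, hdφ i j k hijk, hLeibniz, hdη j k i hjki, hdη k i j hkij]
      simp only [add_mul, mul_add, smul_mul_assoc, mul_smul_comm, mul_assoc,
        z1, z2, hφη, smul_zero]
      module
    have h2 : (φ i + η j * η k) * 2 + eps i • d (η i) = 0 := by
      rw [hdη i j k hijk, smul_add, smul_smul, smul_smul]
      have hscal : eps i * (-2 * eps i) = -2 := by
        have h : eps i * (-2 * eps i) = -2 * (eps i * eps i) := by ring
        rw [h, e2]; norm_num
      rw [hscal]
      have h2s : ((-2 : ℝ)) • φ i + ((-2 : ℝ)) • (η j * η k)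
          = -((φ i + η j * η k) * 2) := by
        rw [neg_smul, neg_smul, two_smul, two_smul, add_mul, mul_two, mul_two]
        abel
      rw [h2s, add_neg_cancel]
    ext1
    · show mapCoeffs d (Polynomial.C (φ i + η j * η k) * Polynomial.X ^ 2) = 0
      rw [hmap, h1, Polynomial.C_0, zero_mul]
    · show Polynomial.derivative
          (Polynomial.C (φ i + η j * η k) * Polynomial.X ^ 2)
          + mapCoeffs d (Polynomial.C (eps i • η i) * Polynomial.X) = 0
      have hder : Polynomial.derivative
          (Polynomial.C (φ i + η j * η k) * Polynomial.X ^ 2)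
          = Polynomial.C ((φ i + η j * η k) * 2) * Polynomial.X := by
        rw [Polynomial.derivative_C_mul, Polynomial.derivative_X_pow]
        push_cast
        rw [← mul_assoc, ← Polynomial.C_mul, pow_one]
      have hX : (Polynomial.X : Polynomial A) = Polynomial.X ^ 1 :=
        (pow_one _).symm
      rw [hder, hX, hmap, map_smul, ← pow_one (Polynomial.X : Polynomial A),
        ← add_mul, ← Polynomial.C_add, h2, Polynomial.C_0, zero_mul]
  have c012 : Cyclic 0 1 2 := Or.inl ⟨rfl, rfl, rfl⟩
  have c120 : Cyclic 1 2 0 := Or.inr (Or.inl ⟨rfl, rfl, rfl⟩)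
  have c201 : Cyclic 2 0 1 := Or.inr (Or.inr ⟨rfl, rfl, rfl⟩)
  intro i j k hc
  rcases hc with ⟨hi, hj, hk⟩ | ⟨hi, hj, hk⟩ | ⟨hi, hj, hk⟩ <;>
      subst hi <;> subst hj <;> subst hk
  · exact main _ _ _ c012 c120 c201
  · exact main _ _ _ c120 c201 c012
  · exact main _ _ _ c201 c012 c120
end
end

section
/- Let (i,j,k) be a cyclic permutation of (1,2,3) and suppose 1-forms η_s, α_s, 2-forms ω_s, and a constant λ = 2 satisfy the para 3-Sasakian relation 2α_i = -epsilon_j (2 + λ) η_i together with the structure equations dη_i = -2 epsilon_i ω_i - 2 epsilon_i η_j ∧ η_k. Then the sp(1,R)-curvature ρ_i = (1/2)[epsilon_k dα_i - epsilon_j α_j ∧ α_k] restricted to the kernel of the η's equals -(1 + λ/2) ω_i = -2 ω_i. -/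
/-- The para 3-Sasakian curvature computation: with `λ = 2`, the relation
`2αᵢ = -εⱼ(2+λ)ηᵢ` and the structure equations
`dηᵢ = -2εᵢωᵢ - 2εᵢηⱼ∧ηₖ`, the `sp(1,ℝ)`-curvature
`ρᵢ = ½(εₖ dαᵢ - εⱼ αⱼ∧αₖ)` restricted to the common kernel of the `η`'s equals
`-(1 + λ/2)ωᵢ = -2ωᵢ`. -/
theorem para3Sasakian_rho_computation
    {V : Type*} [AddCommGroup V] [Module ℝ V]
    (lam : ℝ) (hlam : lam = 2)
    (η α : Fin 3 → V → ℝ)                 -- 1-forms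
    (ω Dη Dα ρ : Fin 3 → V → V → ℝ)       -- 2-forms; Dη s = dη_s, Dα s = dα_s
    (hα : ∀ i j k, Cyclic i j k → ∀ X : V,
      2 * α i X = -eps j * (2 + lam) * η i X)
    (hDη : ∀ i j k, Cyclic i j k → ∀ X Y : V,
      Dη i X Y = -2 * eps i * ω i X Y
        - 2 * eps i * (η j X * η k Y - η j Y * η k X))
    (hDα : ∀ i j k, Cyclic i j k → ∀ X Y : V,  -- d of the relation 2αᵢ = -εⱼ(2+λ)ηᵢ
      2 * Dα i X Y = -eps j * (2 + lam) * Dη i X Y)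
    (hρ : ∀ i j k, Cyclic i j k → ∀ X Y : V,
      ρ i X Y = (1 / 2) * (eps k * Dα i X Y
        - eps j * (α j X * α k Y - α j Y * α k X))) :
    ∀ i j k, Cyclic i j k → ∀ X Y : V,
      (∀ s, η s X = 0) → (∀ s, η s Y = 0) →
      ρ i X Y = -(1 + lam / 2) * ω i X Y ∧ ρ i X Y = -2 * ω i X Y := by
  subst hlam
  intro i j k hc X Y hX hY
  have hcj : Cyclic j k i := by
    rcases hc with ⟨h1,h2,h3⟩|⟨h1,h2,h3⟩|⟨h1,h2,h3⟩ <;> subst h1 <;> subst h2 <;> subst h3 <;> simp [Cyclic]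
  have hck : Cyclic k i j := by
    rcases hc with ⟨h1,h2,h3⟩|⟨h1,h2,h3⟩|⟨h1,h2,h3⟩ <;> subst h1 <;> subst h2 <;> subst h3 <;> simp [Cyclic]
  have hρ' := hρ i j k hc X Y
  have hDα' := hDα i j k hc X Y
  have hDη' := hDη i j k hc X Y
  have hαjX := hα j k i hcj X
  have hαjY := hα j k i hcj Y
  have hαkX := hα k i j hck X
  have hαkY := hα k i j hck Y
  rw [hX j, hX k, hY j, hY k] at *
  rcases hc with ⟨h1,h2,h3⟩|⟨h1,h2,h3⟩|⟨h1,h2,h3⟩ <;> subst h1 <;> subst h2 <;> subst h3 <;>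
    simp only [eps, Matrix.cons_val_zero, Matrix.cons_val_one, Matrix.head_cons,
      Matrix.cons_val_two, Matrix.tail_cons] at * <;>
    constructor <;> nlinarith [hρ', hDα', hDη', hαjX, hαjY, hαkX, hαkY]
end
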